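/- arXiv:2305.11446 — 4 statements merged into one kernel-verified Lean document; each statement's English description precedes it below -/
import Mathlib

section
/- Let G be a finite insoluble group and let x be an element of G not in the soluble radical R(G). If y is an element of G such that the subgroup ⟨x, y⟩ is not soluble, then for every integer i with 0 ≤ i < |x| and gcd(i, |x|) = 1, and every integer j with 0 ≤ j < |x|, the elements x^i·y and y·x^j all lie outside Sol_G(x), and moreover x^i·y ≠ y·x^j for all such i, j. Consequently |G| - |Sol_G(x)| ≥ |x| + φ(|x|), where φ is Euler's totient function. -/
open Subgroup

/-- The soluble radical of a group: the join of all soluble normal subgroups. -/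
def solRadical (G : Type*) [Group G] : Subgroup G :=
  sSup {N : Subgroup G | N.Normal ∧ IsSolvable N}

instance solRadical_normal {G : Type*} [Group G] : (solRadical G).Normal := by
  constructor
  intro n hn g
  have h : solRadical G ≤ (solRadical G).comap (MulAut.conj g).toMonoidHom := by
    apply sSup_le
    rintro N ⟨hnorm, hsol⟩ x hx
    simp only [Subgroup.mem_comap, MulEquiv.coe_toMonoidHom, MulAut.conj_apply]
    exact le_sSup (s := {N : Subgroup G | N.Normal ∧ IsSolvable N}) ⟨hnorm, hsol⟩
      (hnorm.conj_mem x hx g)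
  simpa using h hn

/-- The solubilizer of an element `x`: all `g` such that `⟨x, g⟩` is soluble. -/
def solubilizer {G : Type*} [Group G] (x : G) : Set G :=
  {g : G | IsSolvable (Subgroup.closure ({x, g} : Set G))}

/-- The solubility graph: vertices are elements outside the soluble radical,
two distinct vertices adjacent iff they generate a soluble subgroup. -/
def solGraph (G : Type*) [Group G] : SimpleGraph {x : G // x ∉ solRadical G} where
  Adj a b := a ≠ b ∧ IsSolvable (Subgroup.closure ({a.1, b.1} : Set G))
  symm := ⟨by rintro a b ⟨hne, hs⟩; exact ⟨hne.symm, by rwa [Set.pair_comm]⟩⟩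
  loopless := ⟨by rintro a ⟨h, -⟩; exact h rfl⟩

noncomputable instance {G : Type*} [Group G] [Fintype G] :
    Fintype {x : G // x ∉ solRadical G} := Fintype.ofFinite _

/-- The degree of `x` in the solubility graph (as the number of its neighbours). -/
noncomputable def solDeg (G : Type*) [Group G] (x : G) : ℕ :=
  {g : G | g ∉ solRadical G ∧ g ≠ x ∧
    IsSolvable (Subgroup.closure ({x, g} : Set G))}.ncard

/-- The number of edges of the solubility graph. -/
noncomputable def solEdges (G : Type*) [Group G] : ℕ :=
  (solGraph G).edgeSet.ncard

/-- The solubility degree of a finite group. -/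
noncomputable def Ps (G : Type*) [Group G] : ℚ :=
  (Nat.card {p : G × G // IsSolvable (Subgroup.closure ({p.1, p.2} : Set G))} : ℚ) /
    (Nat.card G : ℚ) ^ 2

/-!
Multiplying `y` on either side by a power of `x` does not change `⟨x, y⟩`, so every `x ^ i * y`
and `y * x ^ j` lies outside `Sol_G(x)`. If `x ^ i * y = y * x ^ j` with `i` prime to `|x|`, then
conjugation by `y` sends the generator `x ^ i` of `⟨x⟩` into `⟨x⟩`; in a finite group this means
`y` normalizes `⟨x⟩`, and `⟨x, y⟩` is then cyclic-by-cyclic, hence soluble. So these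
`φ(|x|) + |x|` elements are pairwise distinct and all lie outside `Sol_G(x)`.
-/

theorem isSolvable_of_isMulCommutative {G : Type*} [Group G] [IsMulCommutative G] :
    Group.IsSolvable G :=
  Group.isSolvable_of_comm Std.Commutative.comm

namespace Subgroup

variable {G : Type*} [Group G]

theorem left_mem_closure_pair (x y : G) : x ∈ closure {x, y} :=
  subset_closure (Set.mem_insert x _)

theorem right_mem_closure_pair (x y : G) : y ∈ closure {x, y} :=
  subset_closure (Set.mem_insert_of_mem x rfl)

theorem closure_pair_eq_of_mem {x y z : G} (hz : z ∈ closure {x, y}) (hy : y ∈ closure {x, z}) :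
    closure {x, z} = closure {x, y} := by
  have hle {u v : G} (hv : v ∈ closure {x, u}) : closure {x, v} ≤ closure {x, u} :=
    (closure_le _).mpr (Set.insert_subset (left_mem_closure_pair x u)
      (Set.singleton_subset_iff.mpr hv))
  exact le_antisymm (hle hz) (hle hy)

theorem closure_pair_zpow_mul (x y : G) (k : ℤ) : closure {x, x ^ k * y} = closure {x, y} := by
  refine closure_pair_eq_of_mem
    (mul_mem (zpow_mem (left_mem_closure_pair x y) k) (right_mem_closure_pair x y)) ?_
  simpa using
    mul_mem (zpow_mem (left_mem_closure_pair x _) (-k)) (right_mem_closure_pair x (x ^ k * y))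

theorem closure_pair_mul_zpow (x y : G) (k : ℤ) : closure {x, y * x ^ k} = closure {x, y} := by
  refine closure_pair_eq_of_mem
    (mul_mem (right_mem_closure_pair x y) (zpow_mem (left_mem_closure_pair x y) k)) ?_
  simpa using
    mul_mem (right_mem_closure_pair x (y * x ^ k)) (zpow_mem (left_mem_closure_pair x _) (-k))

theorem mem_normalizer_of_map_conj_le [Finite G] {H : Subgroup G} {g : G}
    (h : H.map (MulAut.conj g).toMonoidHom ≤ H) : g ∈ normalizer (H : Set G) :=
  mem_normalizer_iff_map_conj_eq.mpr
    (eq_of_le_of_card_ge h (card_map_of_injective (MulAut.conj g).injective).ge)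

theorem mem_normalizer_zpowers_of_inv_mul_mul_mem [Finite G] {x g : G}
    (h : g⁻¹ * x * g ∈ zpowers x) : g ∈ normalizer (zpowers x : Set G) := by
  refine inv_mem_iff.mp (mem_normalizer_of_map_conj_le ?_)
  rw [MonoidHom.map_zpowers, zpowers_le]
  simpa [MulAut.conj_apply] using h

theorem inv_mul_mul_mem_zpowers_of_pow_mul_eq_mul_pow {x y : G} {i j : ℕ}
    (hi : i.gcd (orderOf x) = 1) (h : x ^ i * y = y * x ^ j) : y⁻¹ * x * y ∈ zpowers x := by
  have hconj : y⁻¹ * x ^ i * y = x ^ j := by rw [mul_assoc, h, inv_mul_cancel_left]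
  -- `x` is a power of `x ^ i`, so its conjugate is a power of `x ^ j`.
  have hmap := mem_map_of_mem (MulAut.conj y⁻¹).toMonoidHom (mem_zpowers_pow_iff.mpr hi)
  simp only [MonoidHom.map_zpowers, MulEquiv.coe_toMonoidHom, MulAut.conj_apply, inv_inv,
    hconj] at hmap
  exact zpowers_le.mpr (npow_mem_zpowers x j) hmap

theorem isSolvable_closure_pair_of_mem_normalizer {x y : G}
    (hy : y ∈ normalizer (zpowers x : Set G)) : Group.IsSolvable (closure {x, y}) := by
  let H := closure {x, y}
  let K := (zpowers x).subgroupOf H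
  have : K.Normal := (normal_subgroupOf_iff_le_normalizer
    (zpowers_le.mpr (left_mem_closure_pair x y))).mpr <|
      (closure_le _).mpr (Set.insert_subset (le_normalizer (mem_zpowers x))
        (Set.singleton_subset_iff.mpr hy))
  -- `H ⧸ K` is generated by the images of `x` and `y`, and the image of `x` is trivial.
  have : IsCyclic (H ⧸ K) := by
    refine isCyclic_iff_exists_zpowers_eq_top.mpr
      ⟨(⟨y, right_mem_closure_pair x y⟩ : H), top_le_iff.mp ?_⟩
    rw [← map_top_of_surjective _ (QuotientGroup.mk'_surjective K),
      ← closure_closure_coe_preimage, MonoidHom.map_closure, closure_le]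
    rintro _ ⟨h, hhx | hhy, rfl⟩
    · have hK : h ∈ K := by simp [K, mem_subgroupOf, hhx]
      rw [QuotientGroup.mk'_apply, (QuotientGroup.eq_one_iff h).mpr hK]
      exact one_mem _
    · rw [show h = ⟨y, right_mem_closure_pair x y⟩ from Subtype.ext hhy]
      exact mem_zpowers _
  exact (Group.isSolvable_iff_subgroup_quotient K).mpr
    ⟨isSolvable_of_isMulCommutative, isSolvable_of_isMulCommutative⟩

end Subgroup

open Subgroup

section Solubilizer

variable {G : Type*} [Group G]

theorem zpow_mul_mem_solubilizer_iff (x y : G) (k : ℤ) :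
    x ^ k * y ∈ solubilizer x ↔ y ∈ solubilizer x :=
  Iff.of_eq <| congrArg (fun H : Subgroup G => Group.IsSolvable H) (closure_pair_zpow_mul x y k)

theorem mul_zpow_mem_solubilizer_iff (x y : G) (k : ℤ) :
    y * x ^ k ∈ solubilizer x ↔ y ∈ solubilizer x :=
  Iff.of_eq <| congrArg (fun H : Subgroup G => Group.IsSolvable H) (closure_pair_mul_zpow x y k)

theorem orderOf_add_totient_le_ncard [Finite G] {x y : G} {S : Set G}
    (hpow_mul : ∀ i < orderOf x, i.gcd (orderOf x) = 1 → x ^ i * y ∈ S)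
    (hmul_pow : ∀ j < orderOf x, y * x ^ j ∈ S)
    (hne : ∀ i < orderOf x, i.gcd (orderOf x) = 1 → ∀ j < orderOf x, x ^ i * y ≠ y * x ^ j) :
    orderOf x + (orderOf x).totient ≤ S.ncard := by
  classical
  set n := orderOf x
  let A := ((Finset.range n).filter n.Coprime).image (x ^ · * y)
  let B := (Finset.range n).image (y * x ^ ·)
  have hA : A.card = n.totient := by
    refine (Finset.card_image_of_injOn fun i hi i' hi' h => ?_).trans rfl
    simp only [Finset.coe_filter, Finset.mem_range, Set.mem_ofPred_eq] at hi hi'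
    exact pow_injOn_Iio_orderOf hi.1 hi'.1 (mul_right_cancel h)
  have hB : B.card = n := by
    refine (Finset.card_image_of_injOn fun j hj j' hj' h => ?_).trans (Finset.card_range n)
    simp only [Finset.coe_range, Set.mem_Iio] at hj hj'
    exact pow_injOn_Iio_orderOf hj hj' (mul_left_cancel h)
  have hAB : Disjoint A B := by
    simp only [A, B, Finset.disjoint_left, Finset.mem_image, Finset.mem_filter, Finset.mem_range]
    rintro _ ⟨i, ⟨hi, hcop⟩, rfl⟩ ⟨j, hj, h⟩
    exact hne i hi (Nat.coprime_comm.mp hcop) j hj h.symm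
  have hsub : (↑(A ∪ B) : Set G) ⊆ S := by
    simp only [A, B, Finset.coe_union, Finset.coe_image, Finset.coe_filter, Finset.coe_range,
      Finset.mem_range, Set.union_subset_iff, Set.image_subset_iff]
    exact ⟨fun i ⟨hi, hcop⟩ => hpow_mul i hi (Nat.coprime_comm.mp hcop), hmul_pow⟩
  calc n + n.totient = (A ∪ B).card := by
        rw [Finset.card_union_of_disjoint hAB, hA, hB, add_comm]
    _ = (↑(A ∪ B) : Set G).ncard := (Set.ncard_coe_finset _).symm
    _ ≤ S.ncard := Set.ncard_le_ncard hsub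

end Solubilizer

theorem stmt0_general {G : Type*} [Group G] [Fintype G]
    (x : G) (y : G)
    (hy : ¬ IsSolvable (Subgroup.closure ({x, y} : Set G))) :
    (∀ i : ℕ, i < orderOf x → Nat.gcd i (orderOf x) = 1 → x ^ i * y ∉ solubilizer x) ∧
    (∀ j : ℕ, j < orderOf x → y * x ^ j ∉ solubilizer x) ∧
    (∀ i j : ℕ, i < orderOf x → Nat.gcd i (orderOf x) = 1 → j < orderOf x →
      x ^ i * y ≠ y * x ^ j) ∧
    Nat.card G - (solubilizer x).ncard ≥ orderOf x + Nat.totient (orderOf x) := by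
  have hpow_mul (i : ℕ) : x ^ i * y ∉ solubilizer x := by
    rwa [← zpow_natCast, zpow_mul_mem_solubilizer_iff]
  have hmul_pow (j : ℕ) : y * x ^ j ∉ solubilizer x := by
    rwa [← zpow_natCast, mul_zpow_mem_solubilizer_iff]
  have hne (i j : ℕ) (hi : i.gcd (orderOf x) = 1) : x ^ i * y ≠ y * x ^ j := fun h =>
    hy <| isSolvable_closure_pair_of_mem_normalizer <| mem_normalizer_zpowers_of_inv_mul_mul_mem <|
      inv_mul_mul_mem_zpowers_of_pow_mul_eq_mul_pow hi h
  have hcard := orderOf_add_totient_le_ncard (S := (solubilizer x)ᶜ)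
    (fun i _ _ => hpow_mul i) (fun j _ => hmul_pow j) (fun i _ hi j _ => hne i j hi)
  have hsplit := Set.ncard_add_ncard_compl (solubilizer x)
  exact ⟨fun i _ _ => hpow_mul i, fun j _ => hmul_pow j, fun i j _ hi _ => hne i j hi, by omega⟩

theorem stmt0 {G : Type*} [Group G] [Fintype G] (hG : ¬ IsSolvable G)
    (x : G) (hx : x ∉ solRadical G) (y : G)
    (hy : ¬ IsSolvable (Subgroup.closure ({x, y} : Set G))) :
    (∀ i : ℕ, i < orderOf x → Nat.gcd i (orderOf x) = 1 → x ^ i * y ∉ solubilizer x) ∧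
    (∀ j : ℕ, j < orderOf x → y * x ^ j ∉ solubilizer x) ∧
    (∀ i j : ℕ, i < orderOf x → Nat.gcd i (orderOf x) = 1 → j < orderOf x →
      x ^ i * y ≠ y * x ^ j) ∧
    Nat.card G - (solubilizer x).ncard ≥ orderOf x + Nat.totient (orderOf x) :=
  stmt0_general x y hy
end

section
/- Let G be a finite insoluble group. If some vertex x of the solubility graph Γ_S(G) has degree p - 1 for a prime p, then R(G) = 1. -/
open Subgroup

/-!
The soluble radical `R` is soluble, so `⟨x, g⟩` is soluble iff its image in `G ⧸ R` is: the
solubilizer of `x` is the full preimage of the solubilizer of `x̄`, and has `|R| · t` elements.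
It consists of `R`, `x` and the `p - 1` neighbours of `x`, so `|R| · t = p + |R|` and `|R|`
divides `p`. Now `|R| = p` would force `t = 2`. But `x̄` is not central in `G ⧸ R` (the preimage
of the centre is a soluble normal subgroup), so besides `1` and `x̄` its solubilizer contains
`x̄⁻¹` or, if `x̄` is an involution, a conjugate `x̄ ≠ g x̄ g⁻¹`: two involutions generate a
dihedral group.
-/

open scoped IsMulCommutative

section Solvable

variable {G Q : Type*} [Group G] [Group Q]

theorem isSolvable_of_le {H K : Subgroup G} (h : H ≤ K) [Group.IsSolvable K] :
    Group.IsSolvable H :=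
  Group.isSolvable_of_isSolvable_injective (inclusion_injective h)

theorem isSolvable_comap (f : G →* Q) [Group.IsSolvable f.ker] (H : Subgroup Q)
    [Group.IsSolvable H] : Group.IsSolvable (H.comap f) := by
  refine Group.isSolvable_of_ker_le_range (inclusion (ker_le_comap f H)) (f.subgroupComap H) ?_
  intro k hk
  exact ⟨⟨k, Subtype.ext_iff.mp hk⟩, rfl⟩

theorem isSolvable_map_iff (f : G →* Q) [Group.IsSolvable f.ker] (H : Subgroup G) :
    Group.IsSolvable (H.map f) ↔ Group.IsSolvable H :=
  ⟨fun _ ↦ have := isSolvable_comap f (H.map f); isSolvable_of_le (le_comap_map f H),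
    fun _ ↦ Group.isSolvable_of_surjective (f.subgroupMap_surjective H)⟩

theorem isSolvable_closure_image_iff (f : G →* Q) [Group.IsSolvable f.ker] (s : Set G) :
    Group.IsSolvable (closure (f '' s)) ↔ Group.IsSolvable (closure s) := by
  rw [← MonoidHom.map_closure, isSolvable_map_iff]

instance isSolvable_ker_mk' (N : Subgroup G) [N.Normal] [Group.IsSolvable N] :
    Group.IsSolvable (QuotientGroup.mk' N).ker := by
  rwa [QuotientGroup.ker_mk']

theorem isSolvable_sup_of_normal (H N : Subgroup G) [N.Normal] [Group.IsSolvable H]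
    [Group.IsSolvable N] : Group.IsSolvable ↥(H ⊔ N) := by
  have : Group.IsSolvable (H.map (QuotientGroup.mk' N)) := (isSolvable_map_iff _ H).mpr ‹_›
  rw [← QuotientGroup.ker_mk' N, ← comap_map_eq]
  exact isSolvable_comap _ _

theorem mem_normalizer_zpowers_of_conj_eq_inv {g c : G} (h : g * c * g⁻¹ = c⁻¹) :
    g ∈ normalizer (zpowers c : Set G) := by
  rw [mem_normalizer_iff_map_conj_eq, MonoidHom.map_zpowers]
  exact (congrArg zpowers h).trans zpowers_inv

/-- `zpowers (a * b)` is normal, with cyclic quotient generated by the image of `a`. -/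
theorem isSolvable_of_closure_pair_eq_top {a b : G} (ha : a * a = 1) (hb : b * b = 1)
    (hab : closure {a, b} = ⊤) : Group.IsSolvable G := by
  set K := zpowers (a * b)
  have ha' : a⁻¹ = a := inv_eq_of_mul_eq_one_right ha
  have hb' : b⁻¹ = b := inv_eq_of_mul_eq_one_right hb
  have : K.Normal := by
    rw [← normalizer_eq_top_iff, eq_top_iff, ← hab, closure_le]
    rintro g (rfl | rfl) <;> apply mem_normalizer_zpowers_of_conj_eq_inv
    · rw [mul_inv_rev, ha', hb', ← mul_assoc, ha, one_mul]
    · rw [mul_inv_rev, ha', hb', mul_assoc, mul_assoc, hb, mul_one]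
  have hcyclic : ∀ u : G ⧸ K, u ∈ zpowers (a : G ⧸ K) := by
    intro u
    have hba : (b : G ⧸ K) = (a : G ⧸ K)⁻¹ := by
      refine eq_inv_of_mul_eq_one_right ?_
      rw [← QuotientGroup.mk_mul, QuotientGroup.eq_one_iff]
      exact mem_zpowers (a * b)
    have htop : closure {(a : G ⧸ K), (b : G ⧸ K)} = ⊤ := by
      rw [← Set.image_pair, ← QuotientGroup.coe_mk', ← MonoidHom.map_closure, hab,
        map_top_of_surjective _ (QuotientGroup.mk'_surjective K)]
    refine (closure_le _).mpr ?_ (htop ▸ mem_top u)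
    rintro v (rfl | rfl)
    · exact mem_zpowers _
    · rw [hba]; exact inv_mem (mem_zpowers _)
  have : Group.IsSolvable (G ⧸ K) := Group.isSolvable_of_comm fun u v ↦ by
    obtain ⟨i, rfl⟩ := hcyclic u
    obtain ⟨j, rfl⟩ := hcyclic v
    exact (Commute.refl _).zpow_zpow i j
  exact (Group.isSolvable_iff_subgroup_quotient K).mpr ⟨inferInstance, inferInstance⟩

theorem isSolvable_closure_pair_of_mul_self_eq_one {a b : G} (ha : a * a = 1) (hb : b * b = 1) :
    Group.IsSolvable (closure {a, b}) := by
  let a' : closure {a, b} := ⟨a, subset_closure (by simp)⟩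
  let b' : closure {a, b} := ⟨b, subset_closure (by simp)⟩
  refine isSolvable_of_closure_pair_eq_top (a := a') (b := b') (Subtype.ext ha) (Subtype.ext hb) ?_
  have : Subtype.val ⁻¹' ({a, b} : Set G) = {a', b'} := by
    ext g; simp [a', b', Subtype.ext_iff]
  rw [← this, closure_closure_coe_preimage]

end Solvable

section SolRadical

variable {G : Type*} [Group G]

theorem le_solRadical (N : Subgroup G) [N.Normal] [Group.IsSolvable N] : N ≤ solRadical G :=
  le_sSup ⟨‹_›, ‹_›⟩

instance isSolvable_solRadical [Finite G] : Group.IsSolvable (solRadical G) := by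
  have hsup : SupClosed {N : Subgroup G | N.Normal ∧ Group.IsSolvable N} := by
    rintro H ⟨_, _⟩ N ⟨_, _⟩
    exact ⟨inferInstance, isSolvable_sup_of_normal H N⟩
  exact (hsup.sSup_mem (Set.toFinite _) ⟨inferInstance, inferInstance⟩ subset_rfl).2

theorem mem_solRadical_of_mk_mem_center [Finite G] {x : G}
    (hx : (x : G ⧸ solRadical G) ∈ center (G ⧸ solRadical G)) : x ∈ solRadical G := by
  have := isSolvable_comap (QuotientGroup.mk' (solRadical G)) (center _)
  exact le_solRadical ((center _).comap (QuotientGroup.mk' _)) hx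

end SolRadical

section Solubilizer

variable {G : Type*} [Group G]

theorem mem_solubilizer_of_mem_zpowers {x g : G} (hg : g ∈ zpowers x) : g ∈ solubilizer x := by
  have hle : closure {x, g} ≤ zpowers x := by
    rw [closure_le]
    rintro y (rfl | rfl)
    exacts [mem_zpowers y, hg]
  exact isSolvable_of_le hle

theorem exists_mem_solubilizer_ne_one_ne_self {y : G} (hy : y ∉ center G) :
    ∃ z ∈ solubilizer y, z ≠ 1 ∧ z ≠ y := by
  have hy1 : y ≠ 1 := fun h ↦ hy (h ▸ one_mem _)
  by_cases hsq : y * y = 1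
  · obtain ⟨g, hg⟩ : ∃ g, g * y ≠ y * g := by simpa [mem_center_iff] using hy
    refine ⟨g * y * g⁻¹, isSolvable_closure_pair_of_mul_self_eq_one hsq ?_, ?_, ?_⟩
    · simpa [mul_assoc] using congrArg (fun t ↦ g * t * g⁻¹) hsq
    · rwa [ne_eq, conj_eq_one_iff]
    · rwa [ne_eq, mul_inv_eq_iff_eq_mul]
  · refine ⟨y⁻¹, mem_solubilizer_of_mem_zpowers (inv_mem (mem_zpowers y)), inv_ne_one.mpr hy1, ?_⟩
    rwa [ne_eq, inv_eq_iff_mul_eq_one]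

theorem two_lt_ncard_solubilizer [Finite G] {y : G} (hy : y ∉ center G) :
    2 < (solubilizer y).ncard := by
  obtain ⟨z, hz, hz1, hzy⟩ := exists_mem_solubilizer_ne_one_ne_self hy
  rw [Set.two_lt_ncard_iff]
  exact ⟨1, y, z, mem_solubilizer_of_mem_zpowers (one_mem _),
    mem_solubilizer_of_mem_zpowers (mem_zpowers y), hz, fun h ↦ hy (h ▸ one_mem _), hz1.symm,
    hzy.symm⟩

variable (N : Subgroup G) [N.Normal] [Group.IsSolvable N]

theorem mk_mem_solubilizer_iff {x g : G} :
    (g : G ⧸ N) ∈ solubilizer (x : G ⧸ N) ↔ g ∈ solubilizer x := by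
  have := isSolvable_closure_image_iff (QuotientGroup.mk' N) {x, g}
  rwa [Set.image_pair] at this

theorem card_solubilizer_eq_card_mul (x : G) :
    Nat.card (solubilizer x) = Nat.card N * Nat.card (solubilizer (x : G ⧸ N)) := by
  have hpre : QuotientGroup.mk ⁻¹' solubilizer (x : G ⧸ N) = solubilizer x :=
    Set.ext fun g ↦ mk_mem_solubilizer_iff N
  rw [← hpre, Nat.card_congr (QuotientGroup.preimageMkEquivSubgroupProdSet N _), Nat.card_prod]

end Solubilizer

theorem solDeg_add_card_solRadical {G : Type*} [Group G] [Finite G] {x : G}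
    (hx : x ∉ solRadical G) :
    solDeg G x + (Nat.card (solRadical G) + 1) = Nat.card (solubilizer x) := by
  have hsub : insert x (solRadical G : Set G) ⊆ solubilizer x := by
    rintro g (rfl | hg)
    · exact mem_solubilizer_of_mem_zpowers (mem_zpowers g)
    · rw [← mk_mem_solubilizer_iff (solRadical G), (QuotientGroup.eq_one_iff g).mpr hg]
      exact mem_solubilizer_of_mem_zpowers (one_mem _)
  have hdeg : solDeg G x = (solubilizer x \ insert x (solRadical G : Set G)).ncard := by
    unfold solDeg solubilizer
    congr 1
    ext g
    simp only [Set.mem_ofPred_eq, Set.mem_sdiff, Set.mem_insert_iff, SetLike.mem_coe]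
    tauto
  rw [hdeg, Nat.card_coe_set_eq, ← Set.ncard_sdiff_add_ncard_of_subset hsub,
    Set.ncard_insert_of_notMem hx, ← Nat.card_coe_set_eq (solRadical G : Set G)]
  rfl

theorem stmt5_general {G : Type*} [Group G] [Fintype G]
    (x : G) (hx : x ∉ solRadical G) (p : ℕ) (hp : p.Prime)
    (hdeg : solDeg G x = p - 1) :
    solRadical G = ⊥ := by
  obtain ⟨r, hr⟩ : ∃ r, Nat.card (solRadical G) = r := ⟨_, rfl⟩
  obtain ⟨t, ht⟩ : ∃ t, Nat.card (solubilizer (x : G ⧸ solRadical G)) = t := ⟨_, rfl⟩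
  have hcount : r * t = p + r := by
    rw [← hr, ← ht, ← card_solubilizer_eq_card_mul, ← solDeg_add_card_solRadical hx, hdeg]
    have := hp.one_le
    omega
  have hthree : 2 < t := by
    rw [← ht, Nat.card_coe_set_eq]
    exact two_lt_ncard_solubilizer (mt mem_solRadical_of_mk_mem_center hx)
  have hdvd : r ∣ p := Nat.dvd_add_self_right.mp (hcount ▸ dvd_mul_right r t)
  rcases hp.eq_one_or_self_of_dvd r hdvd with rfl | rfl
  · exact eq_bot_of_card_eq _ hr
  · nlinarith [hp.pos]

theorem stmt5 {G : Type*} [Group G] [Fintype G] (hG : ¬ IsSolvable G)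
    (x : G) (hx : x ∉ solRadical G) (p : ℕ) (hp : p.Prime)
    (hdeg : solDeg G x = p - 1) :
    solRadical G = ⊥ :=
  stmt5_general x hx p hp hdeg
end

section
/- For a finite group G, the solubility degree P_s(G) = (1/|G|²) · |{(x,y) ∈ G×G : ⟨x,y⟩ soluble}| satisfies P_s(G) ≥ Pr(G), where Pr(G) is the commuting probability; equality holds if and only if G is abelian. -/
open Subgroup

/-!
Since commuting elements generate an abelian subgroup, commuting pairs are soluble pairs, so
`Pr(G) ≤ P_s(G)`, with equality exactly when every soluble pair commutes. Suppose it does and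
`a, b ∈ G`. For a prime `p` and a Sylow `p`-subgroup `P`, any `x ∈ P` and `g ∈ N_G(P)` generate
an extension of a `p`-group by a cyclic group, which is soluble, so `x` and `g` commute; hence
`N_G(P) ≤ C_G(P)`. Burnside's transfer then maps `G` onto the abelian group `P` with kernel of
order prime to `p`, and this kernel contains `⁅a, b⁆`. No prime divides the order of `⁅a, b⁆`,
so `a` and `b` commute.
-/

open scoped commutatorElement

section Solubility

variable {G : Type*} [Group G]

theorem isSolvable_closure_pair_of_commute {a b : G} (h : Commute a b) :
    Group.IsSolvable (closure ({a, b} : Set G)) :=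
  have : IsMulCommutative (closure ({a, b} : Set G)) := isMulCommutative_closure <| by
    rintro x (rfl | rfl) y (rfl | rfl) <;> first | rfl | exact h | exact h.symm
  Group.isSolvable_of_comm fun x y => Std.Commutative.comm x y

instance isSolvable_subgroupOf (H K : Subgroup G) [Group.IsSolvable H] :
    Group.IsSolvable (H.subgroupOf K) :=
  Group.isSolvable_of_isSolvable_injective (f := K.subtype.subgroupComap H) fun a b h => by
    ext
    exact (congrArg Subtype.val h :)

theorem isSolvable_map {G' : Type*} [Group G'] (f : G →* G') (H : Subgroup G)
    [Group.IsSolvable H] : Group.IsSolvable (H.map f) :=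
  Group.isSolvable_of_surjective (f.subgroupMap_surjective H)

theorem isSolvable_closure_pair_of_mem_normal {N : Subgroup G} [N.Normal] [Group.IsSolvable N]
    {x : G} (hx : x ∈ N) (g : G) : Group.IsSolvable (closure ({x, g} : Set G)) := by
  set C := closure ({x, g} : Set G)
  set π := (QuotientGroup.mk' N).domRestrict C
  have : Group.IsSolvable π.range := by
    rw [MonoidHom.domRestrict_range, MonoidHom.map_closure, Set.image_pair]
    refine isSolvable_closure_pair_of_commute ?_
    rw [QuotientGroup.mk'_apply, (QuotientGroup.eq_one_iff x).mpr hx]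
    exact Commute.one_left _
  refine Group.isSolvable_of_ker_le_range (N.subgroupOf C).subtype π.rangeRestrict ?_
  rw [MonoidHom.ker_rangeRestrict, MonoidHom.ker_domRestrict, QuotientGroup.ker_mk',
    range_subtype]

theorem isSolvable_closure_pair_of_mem_normalizer {P : Subgroup G} [Group.IsSolvable P]
    {x g : G} (hx : x ∈ P) (hg : g ∈ normalizer (P : Set G)) :
    Group.IsSolvable (closure ({x, g} : Set G)) := by
  set M := normalizer (P : Set G)
  have := isSolvable_closure_pair_of_mem_normal (N := P.subgroupOf M)
    (x := ⟨x, le_normalizer hx⟩) (mem_subgroupOf.mpr hx) ⟨g, hg⟩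
  have hmap := isSolvable_map M.subtype (closure {⟨x, le_normalizer hx⟩, ⟨g, hg⟩})
  rwa [MonoidHom.map_closure, Set.image_pair] at hmap

theorem normalizer_le_centralizer_of_isSolvable_imp_commute
    (h : ∀ x y : G, Group.IsSolvable (closure ({x, y} : Set G)) → Commute x y)
    (P : Subgroup G) [Group.IsSolvable P] :
    normalizer (P : Set G) ≤ centralizer (P : Set G) := fun g hg =>
  mem_centralizer_iff.mpr fun x hx => h x g (isSolvable_closure_pair_of_mem_normalizer hx hg)

theorem not_dvd_orderOf_commutatorElement_of_normalizer_le_centralizer [Finite G] {p : ℕ}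
    [Fact p.Prime] (P : Sylow p G) (hP : normalizer (P : Set G) ≤ centralizer (P : Set G))
    (a b : G) : ¬ p ∣ orderOf ⁅a, b⁆ := by
  set τ := MonoidHom.transferSylow P hP
  have hker : ⁅a, b⁆ ∈ τ.ker := by
    rw [MonoidHom.mem_ker, map_commutatorElement, commutatorElement_eq_one_iff_commute]
    exact Subtype.ext (hP (le_normalizer (τ b).2) _ (τ a).2)
  exact fun hp => MonoidHom.not_dvd_card_ker_transferSylow P hP
    (hp.trans (Subgroup.orderOf_dvd_natCard τ.ker hker))

theorem commute_of_isSolvable_imp_commute [Finite G]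
    (h : ∀ x y : G, Group.IsSolvable (closure ({x, y} : Set G)) → Commute x y) (a b : G) :
    Commute a b := by
  have horder : orderOf ⁅a, b⁆ = 1 := Nat.eq_one_iff_not_exists_prime_dvd.mpr fun p hp => by
    have : Fact p.Prime := ⟨hp⟩
    obtain ⟨P⟩ : Nonempty (Sylow p G) := inferInstance
    have : Group.IsNilpotent P := P.isPGroup'.isNilpotent
    exact not_dvd_orderOf_commutatorElement_of_normalizer_le_centralizer P
      (normalizer_le_centralizer_of_isSolvable_imp_commute h P) a b
  rwa [orderOf_eq_one_iff, commutatorElement_eq_one_iff_commute] at horder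

end Solubility

section SolubilityDegree

variable {G : Type*} [Group G]

theorem Ps_eq_ncard_div :
    Ps G = ({p : G × G | Group.IsSolvable (closure ({p.1, p.2} : Set G))}.ncard : ℚ) /
      (Nat.card G : ℚ) ^ 2 := by
  rw [Ps, ← Nat.card_coe_set_eq]
  rfl

theorem commProb_eq_ncard_div :
    commProb G = ({p : G × G | Commute p.1 p.2}.ncard : ℚ) / (Nat.card G : ℚ) ^ 2 := by
  rw [commProb_def, ← Nat.card_coe_set_eq]
  rfl

theorem setOf_commute_subset_setOf_isSolvable :
    {p : G × G | Commute p.1 p.2} ⊆ {p | Group.IsSolvable (closure ({p.1, p.2} : Set G))} :=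
  fun _ hp => isSolvable_closure_pair_of_commute hp

theorem commProb_le_Ps [Finite G] : commProb G ≤ Ps G := by
  rw [Ps_eq_ncard_div, commProb_eq_ncard_div]
  have hle := Set.ncard_le_ncard (setOf_commute_subset_setOf_isSolvable (G := G))
  gcongr

theorem Ps_eq_commProb_iff [Finite G] : Ps G = commProb G ↔
    ∀ x y : G, Group.IsSolvable (closure ({x, y} : Set G)) → Commute x y := by
  have hcard : (Nat.card G : ℚ) ^ 2 ≠ 0 := by
    have := Nat.card_pos (α := G)
    positivity
  rw [Ps_eq_ncard_div, commProb_eq_ncard_div, div_left_inj' hcard, Nat.cast_inj]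
  constructor
  · intro h x y hxy
    have heq := Set.eq_of_subset_of_ncard_le setOf_commute_subset_setOf_isSolvable h.le
    exact (Set.ext_iff.mp heq (x, y)).mpr hxy
  · intro h
    congr 1
    exact Set.Subset.antisymm (fun p hp => h p.1 p.2 hp) setOf_commute_subset_setOf_isSolvable

end SolubilityDegree

theorem stmt8 {G : Type*} [Group G] [Fintype G] :
    Ps G ≥ commProb G ∧ (Ps G = commProb G ↔ ∀ a b : G, a * b = b * a) :=
  ⟨commProb_le_Ps, Ps_eq_commProb_iff.trans
    ⟨fun h => commute_of_isSolvable_imp_commute h, fun h x y _ => h x y⟩⟩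
end

section
/- Let G be a finite insoluble group and N a normal subgroup of G. Then P_s(G) ≤ P_s(G/N). Moreover, if N is soluble, then P_s(G) = P_s(G/N). -/
/-! The quotient map sends a pair generating a soluble subgroup to such a pair, and every pair
in `(G/N)²` has exactly `|N|²` preimages in `G²`; so `G` has at most `|N|²` times as many
soluble pairs as `G/N`, while `|G|² = |G/N|²|N|²`. If `N` is soluble, the subgroup generated by
a pair lies in the preimage of the subgroup generated by its image, which is soluble-by-soluble,
so the count is exact. -/

open Subgroup

namespace Subgroup

variable {G H : Type*} [Group G] [Group H]

theorem isSolvable_map (f : G →* H) (K : Subgroup G) [Group.IsSolvable K] :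
    Group.IsSolvable (K.map f) :=
  Group.isSolvable_of_surjective (f.subgroupMap_surjective K)

theorem isSolvable_comap (f : G →* H) [Group.IsSolvable f.ker] (K : Subgroup H)
    [Group.IsSolvable K] :
    Group.IsSolvable (K.comap f) := by
  refine Group.isSolvable_of_ker_le_range (inclusion (f.ker_le_comap K)) (f.subgroupComap K) ?_
  intro g hg
  exact ⟨⟨g, congrArg Subtype.val ((f.subgroupComap K).mem_ker.mp hg)⟩, rfl⟩

theorem map_closure_pair (f : G →* H) (x y : G) :
    (closure ({x, y} : Set G)).map f = closure ({f x, f y} : Set H) := by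
  rw [MonoidHom.map_closure, Set.image_pair]

theorem isSolvable_closure_pair_map (f : G →* H) {x y : G}
    (h : Group.IsSolvable (closure ({x, y} : Set G))) :
    Group.IsSolvable (closure ({f x, f y} : Set H)) :=
  map_closure_pair f x y ▸ isSolvable_map f _

theorem isSolvable_closure_pair_of_map (f : G →* H) [Group.IsSolvable f.ker] {x y : G}
    (h : Group.IsSolvable (closure ({f x, f y} : Set H))) :
    Group.IsSolvable (closure ({x, y} : Set G)) := by
  have hle : closure ({x, y} : Set G) ≤ (closure ({f x, f y} : Set H)).comap f := by
    rw [← map_closure_pair, ← map_le_iff_le_comap]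
  have := isSolvable_comap f (closure ({f x, f y} : Set H))
  exact Group.isSolvable_of_isSolvable_injective (inclusion_injective hle)

theorem isSolvable_closure_pair_map_iff (f : G →* H) [Group.IsSolvable f.ker] (x y : G) :
    Group.IsSolvable (closure ({f x, f y} : Set H)) ↔
      Group.IsSolvable (closure ({x, y} : Set G)) :=
  ⟨isSolvable_closure_pair_of_map f, isSolvable_closure_pair_map f⟩

theorem card_subtype_mk_pair (s : Subgroup G) (P : (G ⧸ s) × (G ⧸ s) → Prop) :
    Nat.card {p : G × G // P ((p.1 : G ⧸ s), (p.2 : G ⧸ s))} =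
      Nat.card {q // P q} * Nat.card s ^ 2 := by
  let e : G ≃ (G ⧸ s) × s := groupEquivQuotientProdSubgroup
  have : {p : G × G // P ((p.1 : G ⧸ s), (p.2 : G ⧸ s))} ≃ {q // P q} × (s × s) :=
    ((e.prodCongr e).subtypeEquiv fun _ => Iff.rfl).trans <|
      ((Equiv.prodProdProdComm _ _ _ _).subtypeEquiv fun _ => Iff.rfl).trans
        Equiv.prodSubtypeFstEquivSubtypeProd
  rw [Nat.card_congr this, Nat.card_prod, Nat.card_prod, sq]

end Subgroup

open Subgroup

theorem Ps_quotient {G : Type*} [Group G] [Finite G] (N : Subgroup G) [N.Normal] :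
    Ps (G ⧸ N) = (Nat.card {p : G × G //
      Group.IsSolvable (closure ({(p.1 : G ⧸ N), (p.2 : G ⧸ N)} : Set (G ⧸ N)))} : ℚ) /
        (Nat.card G : ℚ) ^ 2 := by
  have hN : (Nat.card N : ℚ) ≠ 0 := by exact_mod_cast Nat.card_pos.ne'
  rw [Ps, card_subtype_mk_pair N fun q => Group.IsSolvable (closure ({q.1, q.2} : Set (G ⧸ N))),
    card_eq_card_quotient_mul_card_subgroup N]
  push_cast
  rw [mul_pow, mul_div_mul_right _ _ (pow_ne_zero 2 hN)]
  rfl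

theorem stmt9_general {G : Type*} [Group G] [Fintype G]
    (N : Subgroup G) [N.Normal] :
    Ps G ≤ Ps (G ⧸ N) ∧ (IsSolvable N → Ps G = Ps (G ⧸ N)) := by
  have hmap (p : G × G) :=
    isSolvable_closure_pair_map (QuotientGroup.mk' N) (x := p.1) (y := p.2)
  rw [Ps_quotient, Ps]
  refine ⟨?_, fun hN => ?_⟩
  · gcongr
    exact Nat.card_le_card_of_injective _ (Subtype.impEmbedding _ _ hmap).injective
  · have : Group.IsSolvable (QuotientGroup.mk' N).ker := by rwa [QuotientGroup.ker_mk']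
    congr 2
    exact Nat.card_congr (Equiv.subtypeEquivRight fun p =>
      (isSolvable_closure_pair_map_iff (QuotientGroup.mk' N) p.1 p.2).symm)

theorem stmt9 {G : Type*} [Group G] [Fintype G] (hG : ¬ IsSolvable G)
    (N : Subgroup G) [N.Normal] :
    Ps G ≤ Ps (G ⧸ N) ∧ (IsSolvable N → Ps G = Ps (G ⧸ N)) :=
  stmt9_general N
end
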